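/- Let ξ > 1 and let φ ∈ (0, π/6) satisfy 2cos(2φ) > 1 + 1/ξ. Then the constant c₀ = ξ − 1/(2cos(2φ) − 1) is positive, and for every complex number z = l·e^{iφ'} with l > 0 and φ' ∈ (0, φ] ∪ [π − φ, π], one has Im θ_ξ(z) ≥ √3 · c₀ · Im z. -/
import Mathlib


/-- The complex phase function `θ_ξ(z) = √3 (z − 1/z)(ξ − 1/(z² − 1 + z⁻²))`. -/
noncomputable def phaseθ (ξ : ℝ) (z : ℂ) : ℂ :=
  (Real.sqrt 3 : ℂ) * (z - 1 / z) * ((ξ : ℂ) - 1 / (z ^ 2 - 1 + (1 / z) ^ 2))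

lemma core_ineq (a σ K : ℝ) (ha : 0 ≤ a) (hσ : 0 ≤ σ) (hσK : 4*σ ≤ 1 - K) (hK : 0 < K) :
    K * (1 - (a + 4*σ)) ≤ (a + 4*σ)^2 + 2*((a+2)*(1-2*σ) - 2) + 1 := by
  nlinarith [mul_nonneg (by linarith : (0:ℝ) ≤ 1 - 4*σ) (by linarith : (0:ℝ) ≤ 1 - K - 4*σ),
    mul_nonneg ha (by linarith : (0:ℝ) ≤ a + 4*σ + 2 + K)]

set_option maxHeartbeats 1000000 in
/-- For `ξ > 1` and an opening angle `0 < φ < π/6` with `2cos(2φ) > 1 + 1/ξ`, the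
constant `c₀ = ξ − 1/(2cos(2φ) − 1)` is positive and, for every `z = l e^{iφ'}` with
`l > 0` and `φ' ∈ (0, φ] ∪ [π − φ, π]`, one has `Im θ_ξ(z) ≥ √3 c₀ Im z`. -/
theorem stmt_6 (ξ φ : ℝ) (hξ : 1 < ξ) (hφ1 : 0 < φ) (hφ2 : φ < Real.pi / 6)
    (hcos : 1 + 1 / ξ < 2 * Real.cos (2 * φ)) :
    0 < ξ - 1 / (2 * Real.cos (2 * φ) - 1) ∧
    ∀ l φ' : ℝ, 0 < l →
      ((0 < φ' ∧ φ' ≤ φ) ∨ (Real.pi - φ ≤ φ' ∧ φ' ≤ Real.pi)) →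
      Real.sqrt 3 * (ξ - 1 / (2 * Real.cos (2 * φ) - 1)) *
          ((l : ℂ) * Complex.exp (φ' * Complex.I)).im
        ≤ (phaseθ ξ ((l : ℂ) * Complex.exp (φ' * Complex.I))).im := by
  have hξ0 : (0:ℝ) < ξ := by linarith
  have hπ := Real.pi_pos
  obtain ⟨K, hKdef⟩ : ∃ x, x = 2 * Real.cos (2 * φ) - 1 := ⟨_, rfl⟩
  rw [show (1 : ℝ) / (2 * Real.cos (2 * φ) - 1) = 1/K by rw [hKdef]]
  have hK1 : 1/ξ < K := by rw [hKdef]; linarith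
  have hKpos : 0 < K := lt_trans (by positivity) hK1
  have hc₀ : 0 < ξ - 1/K := by
    have h1 : 1 < K * ξ := (div_lt_iff₀ hξ0).mp hK1
    have h2 : 1/K < ξ := (div_lt_iff₀ hKpos).mpr (by linarith)
    linarith
  refine ⟨hc₀, ?_⟩
  intro l φ' hl hsec
  obtain ⟨s, hs⟩ : ∃ x, x = Real.sin φ' := ⟨_, rfl⟩
  obtain ⟨c, hc⟩ : ∃ x, x = Real.cos φ' := ⟨_, rfl⟩
  have hl0 : (l:ℝ) ≠ 0 := ne_of_gt hl
  have hcs : s^2 + c^2 = 1 := by rw [hs, hc]; exact Real.sin_sq_add_cos_sq φ'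
  -- trig facts
  have hφπ : φ < Real.pi := by linarith
  have hs0 : 0 ≤ s := by
    rw [hs]
    rcases hsec with ⟨h1, h2⟩ | ⟨h1, h2⟩
    · exact Real.sin_nonneg_of_nonneg_of_le_pi h1.le (by linarith)
    · exact Real.sin_nonneg_of_nonneg_of_le_pi (by linarith) h2
  have hmono := Real.strictMonoOn_sin.monotoneOn
  have hssin : s ≤ Real.sin φ := by
    rw [hs]
    have hφmem : φ ∈ Set.Icc (-(Real.pi/2)) (Real.pi/2) := by
      constructor <;> [linarith; linarith]
    rcases hsec with ⟨h1, h2⟩ | ⟨h1, h2⟩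
    · exact hmono (Set.mem_Icc.mpr ⟨by linarith, by linarith⟩) hφmem h2
    · have h3 : Real.sin φ' = Real.sin (Real.pi - φ') := by rw [Real.sin_pi_sub]
      rw [h3]
      exact hmono (Set.mem_Icc.mpr ⟨by linarith, by linarith⟩) hφmem (by linarith)
  have hsinφ : 4 * Real.sin φ ^ 2 = 1 - K := by
    have h1 := Real.sin_sq_add_cos_sq φ
    have h2 := Real.cos_two_mul φ
    rw [hKdef]; linarith
  have hs4 : 4 * s^2 ≤ 1 - K := by
    have hsin0 : 0 ≤ Real.sin φ := le_trans hs0 hssin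
    nlinarith
  -- complex setup
  have he : Complex.exp (↑φ' * Complex.I) = (c:ℂ) + (s:ℂ)*Complex.I := by
    rw [Complex.exp_mul_I, ← Complex.ofReal_cos, ← Complex.ofReal_sin, ← hs, ← hc]
  obtain ⟨z, hz⟩ : ∃ x, x = (l:ℂ) * Complex.exp (↑φ' * Complex.I) := ⟨_, rfl⟩
  rw [show (l:ℂ) * Complex.exp (↑φ' * Complex.I) = z from hz.symm]
  have hzne : z ≠ 0 := by
    rw [hz]
    simp [Complex.exp_ne_zero, hl0]
  have hzinv : 1/z = ((1/l : ℝ):ℂ) * ((c:ℂ) - (s:ℂ)*Complex.I) := by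
    rw [hz, one_div, mul_inv, ← Complex.exp_neg,
      show -(↑φ' * Complex.I) = ((-φ' : ℝ):ℂ) * Complex.I by push_cast; ring,
      Complex.exp_mul_I]
    push_cast
    rw [Complex.cos_neg, Complex.sin_neg, ← Complex.ofReal_cos, ← Complex.ofReal_sin,
      ← hc, ← hs]
    ring
  obtain ⟨Ru, hRu⟩ : ∃ x, x = (l - 1/l)*c := ⟨_, rfl⟩
  obtain ⟨Iu, hIu⟩ : ∃ x, x = (l + 1/l)*s := ⟨_, rfl⟩
  have hu : z - 1/z = (Ru:ℂ) + (Iu:ℂ)*Complex.I := by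
    rw [hzinv, hz, he, hRu, hIu]; push_cast; ring
  have hzim : z.im = l * s := by
    rw [hz, he]; simp
  obtain ⟨Wr, hWr⟩ : ∃ x, x = Ru^2 - Iu^2 + 1 := ⟨_, rfl⟩
  obtain ⟨Wi, hWi⟩ : ∃ x, x = 2*Ru*Iu := ⟨_, rfl⟩
  have hw : z^2 - 1 + (1/z)^2 = (Wr:ℂ) + (Wi:ℂ)*Complex.I := by
    have h2 : z^2 - 1 + (1/z)^2 = (z - 1/z)^2 + 1 := by field_simp; ring
    rw [h2, hu, hWr, hWi]; push_cast
    linear_combination ((Iu:ℂ)^2) * Complex.I_sq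
  -- algebraic identities
  have hb : (l+1/l)^2 = (l-1/l)^2 + 4 := by field_simp; ring
  have hc2 : c^2 = 1 - s^2 := by linarith
  have hN : Ru^2 + Iu^2 = (l-1/l)^2 + 4*s^2 := by
    rw [hRu, hIu, mul_pow, mul_pow, hb, hc2]; ring
  have hRe : Ru^2 - Iu^2 = ((l-1/l)^2+2)*(1-2*s^2) - 2 := by
    rw [hRu, hIu, mul_pow, mul_pow, hb, hc2]; ring
  have hKD : K * (1 - (Ru^2+Iu^2)) ≤ Wr^2 + Wi^2 := by
    have hDr : Wr^2 + Wi^2 = (Ru^2+Iu^2)^2 + 2*(Ru^2-Iu^2) + 1 := by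
      rw [hWr, hWi]; ring
    rw [hDr, hN, hRe]
    exact core_ineq _ _ _ (sq_nonneg _) (sq_nonneg _) hs4 hKpos
  have hWrpos : 0 < Wr := by
    rw [hWr, hRe]
    nlinarith [mul_nonneg (sq_nonneg (l-1/l)) (by linarith : (0:ℝ) ≤ 1-2*s^2), hs4, hKpos]
  have hD : 0 < Wr^2 + Wi^2 := by
    have h7 : 0 < Wr^2 := pow_pos hWrpos 2
    have h8 := sq_nonneg Wi
    linarith
  have hDne : Wr^2 + Wi^2 ≠ 0 := ne_of_gt hD
  -- imaginary part of the phase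
  have hWne : ((Wr:ℂ) + (Wi:ℂ)*Complex.I) ≠ 0 := by
    intro h
    have h1 : Wr = 0 := by
      have := congrArg Complex.re h
      simpa using this
    linarith
  have hinvW : (1:ℂ) / ((Wr:ℂ) + (Wi:ℂ)*Complex.I)
      = ((Wr/(Wr^2+Wi^2) : ℝ):ℂ) - ((Wi/(Wr^2+Wi^2) : ℝ):ℂ)*Complex.I := by
    have hDne2 : ((Wr:ℂ)^2 + (Wi:ℂ)^2) ≠ 0 := by
      intro h
      apply hDne
      exact_mod_cast congrArg Complex.re h
    rw [one_div, Complex.inv_def, Complex.normSq_apply]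
    simp only [map_add, map_mul, Complex.conj_ofReal, Complex.conj_I, Complex.add_re,
      Complex.add_im, Complex.mul_re, Complex.mul_im, Complex.ofReal_re, Complex.ofReal_im,
      Complex.I_re, Complex.I_im]
    push_cast
    ring
  have him : (phaseθ ξ z).im
      = Real.sqrt 3 * (Iu * (ξ - Wr/(Wr^2+Wi^2)) + Ru * (Wi/(Wr^2+Wi^2))) := by
    have hph : phaseθ ξ z = (Real.sqrt 3 : ℂ) * ((Ru:ℂ) + (Iu:ℂ)*Complex.I) *
        ((ξ:ℂ) - (((Wr/(Wr^2+Wi^2) : ℝ):ℂ) - ((Wi/(Wr^2+Wi^2) : ℝ):ℂ)*Complex.I)) := by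
      rw [phaseθ, hu, hw, hinvW]
    have hph2 : phaseθ ξ z = ((Real.sqrt 3 : ℝ):ℂ) * ((Ru:ℂ) + (Iu:ℂ)*Complex.I) *
        (((ξ - Wr/(Wr^2+Wi^2) : ℝ):ℂ) + ((Wi/(Wr^2+Wi^2) : ℝ):ℂ)*Complex.I) := by
      rw [hph]; push_cast; ring
    rw [hph2]
    simp only [Complex.mul_im, Complex.mul_re, Complex.ofReal_re, Complex.ofReal_im,
      Complex.I_re, Complex.I_im, Complex.add_re, Complex.add_im]
    ring
  -- final estimate
  rw [him, hzim]
  have key : Iu*(ξ - Wr/(Wr^2+Wi^2)) + Ru*(Wi/(Wr^2+Wi^2))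
      = Iu * (ξ - (1-(Ru^2+Iu^2))/(Wr^2+Wi^2)) := by
    rw [hWr, hWi]
    field_simp
    ring
  rw [key]
  have h1 : (1-(Ru^2+Iu^2))/(Wr^2+Wi^2) ≤ 1/K := by
    rw [div_le_div_iff₀ hD hKpos]; linarith
  have h3 : l*s ≤ Iu := by
    rw [hIu]
    nlinarith [mul_nonneg (le_of_lt (by positivity : (0:ℝ) < 1/l)) hs0]
  have h5 : (ξ - 1/K)*(l*s) ≤ (ξ - (1-(Ru^2+Iu^2))/(Wr^2+Wi^2))*Iu :=
    mul_le_mul (by linarith) h3 (mul_nonneg hl.le hs0) (by linarith)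
  calc Real.sqrt 3 * (ξ - 1/K) * (l*s)
      = Real.sqrt 3 * ((ξ - 1/K)*(l*s)) := by ring
    _ ≤ Real.sqrt 3 * ((ξ - (1-(Ru^2+Iu^2))/(Wr^2+Wi^2))*Iu) :=
        mul_le_mul_of_nonneg_left h5 (Real.sqrt_nonneg 3)
    _ = Real.sqrt 3 * (Iu * (ξ - (1-(Ru^2+Iu^2))/(Wr^2+Wi^2))) := by ring
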